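/- Albert identities (power-associativity of a binary operation in the composition algebra): for every bilinear map μ ∈ C², writing μ² := μ ∘ μ ∈ C³, one has μ² ∘ μ = μ ∘ μ² and (μ² ∘ μ) ∘ μ = μ² ∘ μ². Consequently, by the Albert criterion, over a field of characteristic 0 the subalgebra of the composition algebra (C, ∘) generated by μ is power-associative. -/

import Mathlib

/-! In the brace description of the pre-Lie product `∘`, the associator `(h ∘ g) ∘ g - h ∘ (g ∘ g)`
is the sum of the double insertions `(h ∘ᵢ g) ∘ⱼ g` in which the two copies of `g` land in
different slots of `h`: the insertions of the second `g` into the first one reassemble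
`h ∘ (g ∘ g)`. Exchanging the two insertions is a bijection between the terms with `i < j` and
those with `j < i` and multiplies each term by `(-1)^{|g||g|}`, which is `-1` when `|g|` is odd.
So the associator `(h, g, g)` vanishes for every `g` of odd `|g|`, over any ring. Both Albert
identities are instances of this, with `g = μ` and `h = μ`, resp. `h = μ²`. -/

open Finset

section OperadPrelude

variable {K : Type*} [CommRing K] {L : Type*} [AddCommGroup L] [Module K L]

/-- `C K L n`: the `K`-module of `n`-multilinear maps `L^n → L`
(the degree-`n` component of the endomorphism operad of `L`). -/
abbrev C (K L : Type*) [CommRing K] [AddCommGroup L] [Module K L] (n : ℕ) :=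
  MultilinearMap K (fun _ : Fin n => L) L

/-- The extension of an `n`-ary multilinear operation to sequences `ℕ → L`:
it evaluates `f` on the first `n` entries of the sequence.  Two `n`-ary
multilinear operations are equal iff their extensions are equal, so operadic
identities are stated as identities between extensions. -/
def ex {n : ℕ} (f : C K L n) : (ℕ → L) → L := fun x => f fun j => x j.1

/-- The sign `(-1)^e` for an integer exponent `e`. -/
def sgn (e : ℤ) : ℤ := (((-1 : ℤˣ) ^ e : ℤˣ) : ℤ)

/-- Partial composition `f ∘ᵢ g`, where `n = deg g`:
`(f ∘ᵢ g)(x₀, x₁, …) = (-1)^{i(n-1)} f(x₀,…,x_{i-1}, g(x_i,…,x_{i+n-1}), x_{i+n},…)`. -/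
def pc (n i : ℕ) (f g : (ℕ → L) → L) : (ℕ → L) → L :=
  fun x => sgn ((i : ℤ) * ((n : ℤ) - 1)) •
    f fun j => if j < i then x j else if j = i then g (fun k => x (i + k)) else x (j + n - 1)

/-- Total composition `f ∘ g := Σ_{i=0}^{m-1} f ∘ᵢ g`, where `m = deg f`, `n = deg g`. -/
def tc (m n : ℕ) (f g : (ℕ → L) → L) : (ℕ → L) → L :=
  fun x => ∑ i ∈ Finset.range m, pc n i f g x

/-- The associator `(h, f, g) := (h ∘ f) ∘ g − h ∘ (f ∘ g)` of the total composition,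
where `m = deg h`, `n = deg f`, `p = deg g`. -/
def assoc (m n p : ℕ) (h f g : (ℕ → L) → L) : (ℕ → L) → L :=
  fun x => tc (m + n - 1) p (tc m n h f) g x - tc m (n + p - 1) h (tc n p f g) x

/-- The brace `⟨h|fg⟩ := Σ (h ∘ᵢ f) ∘ⱼ g`, summed over `0 ≤ i ≤ m-2`,
`i + n ≤ j ≤ m + n - 2`, where `m = deg h`, `n = deg f`, `p = deg g`. -/
def br2 (m n p : ℕ) (h f g : (ℕ → L) → L) : (ℕ → L) → L :=
  fun x => ∑ i ∈ Finset.range (m - 1), ∑ j ∈ Finset.Icc (i + n) (m + n - 2),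
    pc p j (pc n i h f) g x

/-- The triple brace `⟨h|fgb⟩ := Σ ((h ∘ᵢ f) ∘ⱼ g) ∘ₖ b`, summed over `0 ≤ i ≤ m-3`,
`i + n ≤ j ≤ m + n - 3`, `j + p ≤ k ≤ m + n + p - 3`, where
`m = deg h`, `n = deg f`, `p = deg g`, `q = deg b`. -/
def br3 (m n p q : ℕ) (h f g b : (ℕ → L) → L) : (ℕ → L) → L :=
  fun x => ∑ i ∈ Finset.range (m - 2), ∑ j ∈ Finset.Icc (i + n) (m + n - 3),
    ∑ k ∈ Finset.Icc (j + p) (m + n + p - 3),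
      pc q k (pc p j (pc n i h f) g) b x

/-- The Gerstenhaber bracket `[f,g] := f ∘ g − (-1)^{|f||g|} g ∘ f`,
where `m = deg f`, `n = deg g`, `|f| = m - 1`, `|g| = n - 1`. -/
def gb (m n : ℕ) (f g : (ℕ → L) → L) : (ℕ → L) → L :=
  fun x => tc m n f g x - sgn (((m : ℤ) - 1) * ((n : ℤ) - 1)) • tc n m g f x

/-- The cup product `f ⌣ g := (-1)^{deg f} (μ ∘₀ f) ∘_{deg f} g`,
where `m = deg f`, `n = deg g`. -/
def cup (μ : C K L 2) (m n : ℕ) (f g : (ℕ → L) → L) : (ℕ → L) → L :=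
  fun x => sgn (m : ℤ) • pc n m (pc m 0 (ex μ) f) g x

/-- The coboundary operator `δ_μ f := −[f, μ]`, where `m = deg f`. -/
def delta (μ : C K L 2) (m : ℕ) (f : (ℕ → L) → L) : (ℕ → L) → L :=
  fun x => - gb m 2 f (ex μ) x

lemma sgn_add (a b : ℤ) : sgn (a + b) = sgn a * sgn b := by
  simp [sgn, zpow_add]

lemma sgn_of_odd {a : ℤ} (ha : Odd a) : sgn a = -1 := by
  simp [sgn, ha.neg_one_zpow]

def splice {α : Type*} (n i : ℕ) (x : ℕ → α) (v : α) : ℕ → α :=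
  fun j => if j < i then x j else if j = i then v else x (j + n - 1)

lemma pc_apply (n i : ℕ) (f g : (ℕ → L) → L) (x : ℕ → L) :
    pc n i f g x = sgn ((i : ℤ) * ((n : ℤ) - 1)) • f (splice n i x (g fun k => x (i + k))) :=
  rfl

lemma tc_apply (m n : ℕ) (f g : (ℕ → L) → L) (x : ℕ → L) :
    tc m n f g x = ∑ i ∈ range m, pc n i f g x :=
  rfl

section splice

variable {α : Type*} {n p i j k s : ℕ} {x : ℕ → α} {v w : α}

lemma splice_eq_update (x : ℕ → α) (w w' : α) :
    splice n i x w = Function.update (splice n i x w') i w := by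
  funext j; by_cases j = i <;> simp_all [splice]

lemma splice_update_of_lt (hs : s < i) :
    splice n i (Function.update x s v) w = Function.update (splice n i x w) s v := by
  funext j; simp only [splice, Function.update_apply]; split_ifs <;> first | rfl | omega

lemma splice_update_of_le_of_lt (hs₁ : i ≤ s) (hs₂ : s < i + n) :
    splice n i (Function.update x s v) w = splice n i x w := by
  funext j; simp only [splice, Function.update_apply]; split_ifs <;> first | rfl | omega

lemma splice_update_of_add_le (hs : i + n ≤ s) :
    splice n i (Function.update x s v) w = Function.update (splice n i x w) (s + 1 - n) v := by
  funext j; simp only [splice, Function.update_apply]; split_ifs <;> first | rfl | omega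

lemma shift_update_of_lt (hs : s < i) :
    (fun k => Function.update x s v (i + k)) = fun k => x (i + k) := by
  funext k; simp only [Function.update_apply]; split_ifs <;> first | rfl | omega

lemma shift_update_of_le (hs : i ≤ s) :
    (fun k => Function.update x s v (i + k)) = Function.update (fun k => x (i + k)) (s - i) v := by
  funext k; simp only [Function.update_apply]; split_ifs <;> first | rfl | omega

lemma shift_splice_of_le (hk : k ≤ j) :
    (fun r => splice p j x w (k + r)) = splice p (j - k) (fun r => x (k + r)) w := by
  funext r; simp only [splice]; split_ifs <;> first | rfl | (congr 1; omega)

lemma shift_splice_of_add_le (hj : i + n ≤ j) :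
    (fun r => splice n i x v (j + 1 - n + r)) = fun r => x (j + r) := by
  funext r; simp only [splice]; split_ifs <;> first | rfl | (congr 1; omega)

lemma splice_splice_of_lt (hk : k < n) :
    splice n i (splice p (i + k) x w) v = splice (n + p - 1) i x v := by
  funext r; simp only [splice]; split_ifs <;> first | rfl | (congr 1; omega)

lemma splice_splice_of_add_le (hj : i + n ≤ j) :
    splice n i (splice p j x w) v = splice p (j + 1 - n) (splice n i x v) w := by
  funext r; simp only [splice]; split_ifs <;> first | rfl | (congr 1; omega)

end splice

def IsAdditiveAt (i : ℕ) (f : (ℕ → L) → L) : Prop :=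
  ∀ (x : ℕ → L) (a b : L),
    f (Function.update x i (a + b)) = f (Function.update x i a) + f (Function.update x i b)

namespace IsAdditiveAt

variable {i : ℕ} {f : (ℕ → L) → L}

def toAddMonoidHom (hf : IsAdditiveAt i f) (x : ℕ → L) : L →+ L :=
  AddMonoidHom.mk' (fun a => f (Function.update x i a)) (hf x)

lemma map_sum (hf : IsAdditiveAt i f) (x : ℕ → L) {ι : Type*} (s : Finset ι) (v : ι → L) :
    f (Function.update x i (∑ c ∈ s, v c)) = ∑ c ∈ s, f (Function.update x i (v c)) :=
  _root_.map_sum (hf.toAddMonoidHom x) v s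

lemma map_zsmul (hf : IsAdditiveAt i f) (x : ℕ → L) (c : ℤ) (a : L) :
    f (Function.update x i (c • a)) = c • f (Function.update x i a) :=
  _root_.map_zsmul (hf.toAddMonoidHom x) c a

end IsAdditiveAt

def DependsOnFirst (n : ℕ) (f : (ℕ → L) → L) : Prop :=
  ∀ x y : ℕ → L, (∀ j < n, x j = y j) → f x = f y

structure IsMultiadditive (n : ℕ) (f : (ℕ → L) → L) : Prop where
  dependsOnFirst : DependsOnFirst n f
  additiveAt : ∀ i < n, IsAdditiveAt i f

lemma isMultiadditive_ex {n : ℕ} (f : C K L n) : IsMultiadditive n (ex f) where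
  dependsOnFirst x y hxy := congrArg f (funext fun j => hxy j j.2)
  additiveAt i hi x a b := by
    have hupd : ∀ v, (fun j : Fin n => Function.update x i v j) =
        Function.update (fun j : Fin n => x j) ⟨i, hi⟩ v := by
      intro v; funext j; simp [Function.update_apply, Fin.ext_iff]
    simp only [ex, hupd, f.map_update_add]

namespace IsMultiadditive

variable {m n i : ℕ} {h g : (ℕ → L) → L}

lemma sum {ι : Type*} (s : Finset ι) {f : ι → (ℕ → L) → L}
    (hf : ∀ c ∈ s, IsMultiadditive n (f c)) : IsMultiadditive n fun x => ∑ c ∈ s, f c x where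
  dependsOnFirst x y hxy := Finset.sum_congr rfl fun c hc => (hf c hc).dependsOnFirst x y hxy
  additiveAt i hi x a b := by
    rw [← Finset.sum_add_distrib]
    exact Finset.sum_congr rfl fun c hc => (hf c hc).additiveAt i hi x a b

lemma pc (hh : IsMultiadditive m h) (hg : IsMultiadditive n g) (hi : i < m) :
    IsMultiadditive (m + n - 1) (pc n i h g) where
  dependsOnFirst x y hxy := by
    simp only [pc_apply]
    congr 1
    refine hh.dependsOnFirst _ _ fun j hj => ?_
    simp only [splice]
    split_ifs
    · exact hxy j (by omega)
    · exact hg.dependsOnFirst _ _ fun k hk => hxy _ (by omega)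
    · exact hxy _ (by omega)
  additiveAt s hs x a b := by
    simp only [pc_apply, ← smul_add]
    congr 1
    rcases lt_or_ge s i with hsi | hsi
    · simp only [shift_update_of_lt hsi, splice_update_of_lt hsi]
      exact hh.additiveAt s (by omega) _ a b
    rcases lt_or_ge s (i + n) with hsn | hsn
    · simp only [shift_update_of_le hsi, splice_update_of_le_of_lt hsi hsn]
      rw [hg.additiveAt (s - i) (by omega)]
      simpa only [← splice_eq_update] using hh.additiveAt i hi (splice n i x 0) _ _
    · have hshift : ∀ v, g (fun k => Function.update x s v (i + k)) = g fun k => x (i + k) :=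
        fun v => hg.dependsOnFirst _ _ fun k hk => Function.update_of_ne (by omega) _ _
      simp only [hshift, splice_update_of_add_le hsn]
      exact hh.additiveAt (s + 1 - n) (by omega) _ a b

lemma tc (hh : IsMultiadditive m h) (hg : IsMultiadditive n g) :
    IsMultiadditive (m + n - 1) (tc m n h g) :=
  sum _ fun _ hi => hh.pc hg (mem_range.mp hi)

end IsMultiadditive

section composition

variable {m n p i j k : ℕ} {h f g : (ℕ → L) → L}

lemma pc_pc_of_lt (hh : IsAdditiveAt i h) (hk : k < n) :
    pc p (i + k) (pc n i h f) g = pc (n + p - 1) i h (pc p k f g) := by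
  funext x
  simp only [pc_apply, shift_splice_of_le (Nat.le_add_right i k), splice_splice_of_lt hk,
    Nat.add_sub_cancel_left, add_assoc]
  rw [splice_eq_update x (_ • _) 0, hh.map_zsmul, ← splice_eq_update, smul_smul, smul_smul,
    ← sgn_add, ← sgn_add]
  congr 2
  push_cast [show 1 ≤ n + p by omega]
  ring

lemma pc_pc_of_add_le (hf : DependsOnFirst n f) (hj : i + n ≤ j) (x : ℕ → L) :
    pc p j (pc n i h f) g x =
      sgn (((n : ℤ) - 1) * ((p : ℤ) - 1)) • pc n i (pc p (j + 1 - n) h g) f x := by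
  have hfx : f (fun r => splice p j x (g fun s => x (j + s)) (i + r)) = f fun r => x (i + r) :=
    hf _ _ fun r hr => if_pos (by omega)
  simp only [pc_apply, hfx, splice_splice_of_add_le hj, shift_splice_of_add_le hj, smul_smul,
    ← sgn_add]
  congr 2
  push_cast [show n ≤ j + 1 by omega]
  ring

lemma pc_tc_left (x : ℕ → L) :
    pc p j (tc m n h f) g x = ∑ i ∈ range m, pc p j (pc n i h f) g x :=
  Finset.smul_sum ..

lemma pc_tc_right (hh : IsAdditiveAt i h) (x : ℕ → L) :
    pc (n + p - 1) i h (tc n p f g) x = ∑ k ∈ range n, pc (n + p - 1) i h (pc p k f g) x := by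
  simp only [pc_apply, tc_apply]
  rw [splice_eq_update x (∑ _ ∈ _, _) 0, hh.map_sum, Finset.smul_sum]
  simp only [← splice_eq_update]

lemma sum_pc_pc_far_self (hg : DependsOnFirst n g) (hn : Odd (n - 1)) (x : ℕ → L) :
    ∑ i ∈ range m, ∑ j ∈ Ico (i + n) (m + n - 1), pc n j (pc n i h g) g x =
      -∑ i ∈ range m, ∑ j ∈ range i, pc n j (pc n i h g) g x := by
  have hn₀ := hn.pos
  have hsgn : sgn (((n : ℤ) - 1) * ((n : ℤ) - 1)) = -1 := by
    have hcast : ((n - 1 : ℕ) : ℤ) = (n : ℤ) - 1 := by push_cast [show 1 ≤ n by omega]; ring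
    exact sgn_of_odd (hcast ▸ (hn.mul hn).natCast)
  calc ∑ i ∈ range m, ∑ j ∈ Ico (i + n) (m + n - 1), pc n j (pc n i h g) g x
      = ∑ i ∈ range m, ∑ i' ∈ Ico (i + 1) m, -pc n i (pc n i' h g) g x := by
        refine Finset.sum_congr rfl fun i _ => ?_
        rw [show i + n = i + 1 + (n - 1) by omega, show m + n - 1 = m + (n - 1) by omega,
          ← Finset.sum_Ico_add']
        refine Finset.sum_congr rfl fun i' hi' => ?_
        rw [mem_Ico] at hi'
        rw [pc_pc_of_add_le hg (by omega), hsgn, neg_one_smul,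
          show i' + (n - 1) + 1 - n = i' by omega]
    _ = -∑ i ∈ range m, ∑ j ∈ range i, pc n j (pc n i h g) g x := by
        rw [Finset.sum_comm' (t' := range m) (s' := range)]
        · simp only [Finset.sum_neg_distrib]
        · intro i i'; simp only [mem_range, mem_Ico]; omega

lemma tc_tc_self_of_odd (hh : ∀ i < m, IsAdditiveAt i h) (hg : DependsOnFirst n g)
    (hn : Odd (n - 1)) : tc (m + n - 1) n (tc m n h g) g = tc m (n + n - 1) h (tc n n g g) := by
  funext x
  calc tc (m + n - 1) n (tc m n h g) g x
      = ∑ i ∈ range m, ∑ j ∈ range (m + n - 1), pc n j (pc n i h g) g x := by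
        simp only [tc_apply, pc_tc_left]
        exact Finset.sum_comm
    _ = ∑ i ∈ range m, (∑ j ∈ range i, pc n j (pc n i h g) g x
          + ∑ k ∈ range n, pc n (i + k) (pc n i h g) g x
          + ∑ j ∈ Ico (i + n) (m + n - 1), pc n j (pc n i h g) g x) := by
        refine Finset.sum_congr rfl fun i hi => ?_
        rw [mem_range] at hi
        rw [← Finset.sum_range_add, Finset.sum_range_add_sum_Ico _ (by omega)]
    _ = ∑ i ∈ range m, ∑ k ∈ range n, pc n (i + k) (pc n i h g) g x := by
        rw [Finset.sum_add_distrib, Finset.sum_add_distrib, sum_pc_pc_far_self hg hn]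
        abel
    _ = tc m (n + n - 1) h (tc n n g g) x := by
        refine Finset.sum_congr rfl fun i hi => ?_
        rw [mem_range] at hi
        rw [pc_tc_right (hh i hi)]
        exact Finset.sum_congr rfl fun k hk => by rw [pc_pc_of_lt (hh i hi) (mem_range.mp hk)]

end composition

/-- the Albert identities `μ² ∘ μ = μ ∘ μ²` and
`(μ² ∘ μ) ∘ μ = μ² ∘ μ²`, where `μ² := μ ∘ μ ∈ C³`; by the Albert criterion they
imply power-associativity of the subalgebra generated by `μ` in `(C, ∘)` over a
field of characteristic `0`. -/
theorem albert_identities (μ : C K L 2) :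
    tc 3 2 (tc 2 2 (ex μ) (ex μ)) (ex μ) = tc 2 3 (ex μ) (tc 2 2 (ex μ) (ex μ)) ∧
      tc 4 2 (tc 3 2 (tc 2 2 (ex μ) (ex μ)) (ex μ)) (ex μ)
        = tc 3 3 (tc 2 2 (ex μ) (ex μ)) (tc 2 2 (ex μ) (ex μ)) := by
  have hμ := isMultiadditive_ex μ
  have hodd : Odd (2 - 1) := odd_one
  exact ⟨tc_tc_self_of_odd hμ.additiveAt hμ.dependsOnFirst hodd,
    tc_tc_self_of_odd (hμ.tc hμ).additiveAt hμ.dependsOnFirst hodd⟩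

end OperadPrelude
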